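/- For every constant κ > 0, there exists a joint distribution of four random variables (A, B, C, D) on finite sets such that I(C:D) > I(C:D|A) + I(C:D|B) + κ·(I(A:B) + I(A:B|C)). -/

import Mathlib

open scoped BigOperators Classical

noncomputable section

/-- `p` is a probability mass function on the finite type `Ω`. -/
def IsPMF {Ω : Type*} [Fintype Ω] (p : Ω → ℝ) : Prop :=
  (∀ ω, 0 ≤ p ω) ∧ ∑ ω, p ω = 1

/-- Probability of the event `X = s` under `p`. -/
def prOf {Ω S : Type*} [Fintype Ω] [DecidableEq S] (p : Ω → ℝ) (X : Ω → S) (s : S) : ℝ :=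
  ∑ ω ∈ Finset.univ.filter (fun ω => X ω = s), p ω

/-- Shannon entropy (in bits) of the random variable `X` under the pmf `p`. -/
def ent {Ω S : Type*} [Fintype Ω] [Fintype S] [DecidableEq S] (p : Ω → ℝ) (X : Ω → S) : ℝ :=
  - ∑ s : S, prOf p X s * Real.logb 2 (prOf p X s)

/-- Mutual information `I(X:Y) = H(X) + H(Y) - H(X,Y)`. -/
def mi {Ω S T : Type*} [Fintype Ω] [Fintype S] [Fintype T] [DecidableEq S] [DecidableEq T]
    (p : Ω → ℝ) (X : Ω → S) (Y : Ω → T) : ℝ :=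
  ent p X + ent p Y - ent p (fun ω => (X ω, Y ω))

/-- Conditional mutual information `I(X:Y|Z) = H(X,Z) + H(Y,Z) - H(X,Y,Z) - H(Z)`. -/
def cmi {Ω S T U : Type*} [Fintype Ω] [Fintype S] [Fintype T] [Fintype U]
    [DecidableEq S] [DecidableEq T] [DecidableEq U]
    (p : Ω → ℝ) (X : Ω → S) (Y : Ω → T) (Z : Ω → U) : ℝ :=
  ent p (fun ω => (X ω, Z ω)) + ent p (fun ω => (Y ω, Z ω))
    - ent p (fun ω => (X ω, Y ω, Z ω)) - ent p Z

/-- Conditional entropy `H(X|Y) = H(X,Y) - H(Y)`. -/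
def condEnt {Ω S T : Type*} [Fintype Ω] [Fintype S] [Fintype T] [DecidableEq S] [DecidableEq T]
    (p : Ω → ℝ) (X : Ω → S) (Y : Ω → T) : ℝ :=
  ent p (fun ω => (X ω, Y ω)) - ent p Y

/-- The four coordinate random variables on `Bool × Bool × Bool × Bool`. -/
def vA : Bool × Bool × Bool × Bool → Bool := fun ω => ω.1
def vB : Bool × Bool × Bool × Bool → Bool := fun ω => ω.2.1
def vC : Bool × Bool × Bool × Bool → Bool := fun ω => ω.2.2.1
def vD : Bool × Bool × Bool × Bool → Bool := fun ω => ω.2.2.2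

/-!
In the witness with parameter `ε`, given `A` or given `B` one of `C`, `D` is constant, and given `C`
the pair `(A, B)` is independent, so the three conditional terms vanish identically and the gap is
`I(C:D) - κ I(A:B)`. At `ε = 0` the variable `C` is constant and `A`, `B` are independent uniform
bits, so both informations vanish; but `I(C:D)` grows with slope `log₂ (4/3)` while `I(A:B)`, having
a minimum there, has slope `0`. Hence the gap is positive for small `ε > 0`.
-/

open Real Filter Topology

lemma ent_eq_sum_negMulLog {Ω S : Type*} [Fintype Ω] [Fintype S] [DecidableEq S]
    (p : Ω → ℝ) (X : Ω → S) : ent p X = (∑ s, negMulLog (prOf p X s)) / log 2 := by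
  simp only [ent, negMulLog, logb, Finset.sum_div]
  rw [← Finset.sum_neg_distrib]
  congr 1; ext s; ring

lemma negMulLog_div (x c : ℝ) : negMulLog (x / c) = (negMulLog x + x * log c) / c := by
  have hinv : negMulLog c⁻¹ = c⁻¹ * log c := by simp [negMulLog, log_inv]
  rw [div_eq_mul_inv, negMulLog_mul, hinv]
  ring

lemma hasDerivAt_negMulLog_affine {a : ℝ} (b : ℝ) (ha : a ≠ 0) :
    HasDerivAt (fun ε => negMulLog (a + b * ε)) (b * (-log a - 1)) 0 := by
  have hinner : HasDerivAt (fun ε => a + b * ε) b 0 := by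
    simpa using ((hasDerivAt_id (0 : ℝ)).const_mul b).const_add a
  simpa [Function.comp_def, mul_comm] using
    (hasDerivAt_negMulLog (x := a + b * 0) (by simpa using ha)).comp 0 hinner

theorem HasDerivAt.eventually_lt_right {f : ℝ → ℝ} {f' x : ℝ} (hf : HasDerivAt f f' x)
    (hf' : 0 < f') : ∀ᶠ y in 𝓝[>] x, f x < f y := by
  filter_upwards [(hasDerivAt_iff_tendsto_slope_left_right.mp hf).2.eventually
    (eventually_gt_nhds hf'), self_mem_nhdsWithin] with y hslope hxy
  exact (slope_pos_iff_of_le hxy.le).mp hslope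

def zyWitness (ε : ℝ) : Bool × Bool × Bool × Bool → ℝ
  | (false, false, false, true) | (false, true, false, false)
  | (true, false, false, true) | (true, true, false, true) => (1 - ε) / 4
  | (true, false, true, true) => ε
  | _ => 0

lemma isPMF_zyWitness {ε : ℝ} (h0 : 0 ≤ ε) (h1 : ε ≤ 1) : IsPMF (zyWitness ε) := by
  refine ⟨?_, ?_⟩
  · rintro ⟨_ | _, _ | _, _ | _, _ | _⟩ <;> simp [zyWitness] <;> linarith
  · simp [zyWitness, Fintype.sum_prod_type]
    ring

lemma cmi_vC_vD_vA_zyWitness (ε : ℝ) : cmi (zyWitness ε) vC vD vA = 0 := by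
  simp only [cmi, ent_eq_sum_negMulLog, prOf, Finset.sum_filter]
  norm_num [Fintype.sum_prod_type, vA, vC, vD, zyWitness]
  ring_nf

lemma cmi_vC_vD_vB_zyWitness (ε : ℝ) : cmi (zyWitness ε) vC vD vB = 0 := by
  simp only [cmi, ent_eq_sum_negMulLog, prOf, Finset.sum_filter]
  norm_num [Fintype.sum_prod_type, vB, vC, vD, zyWitness]
  ring_nf

lemma cmi_vA_vB_vC_zyWitness (ε : ℝ) : cmi (zyWitness ε) vA vB vC = 0 := by
  simp only [cmi, ent_eq_sum_negMulLog, prOf, Finset.sum_filter]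
  norm_num [Fintype.sum_prod_type, vA, vB, vC, zyWitness]
  ring_nf
  -- given `C = 0`, the pair `(A, B)` is uniform on four points: split off the factor `1 - ε`
  rw [show 1 / 2 + ε * (-1 / 2) = (1 - ε) / 2 by ring, show 1 / 4 + ε * (-1 / 4) = (1 - ε) / 4 by ring,
    negMulLog_div, negMulLog_div, show (4 : ℝ) = 2 ^ 2 by norm_num, log_pow]
  push_cast
  ring

lemma mi_vC_vD_zyWitness (ε : ℝ) : mi (zyWitness ε) vC vD =
    (negMulLog (1 + -1 * ε) + negMulLog (3 / 4 + 1 / 4 * ε) - negMulLog (3 / 4 + -3 / 4 * ε))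
      / log 2 := by
  simp only [mi, ent_eq_sum_negMulLog, prOf, Finset.sum_filter]
  norm_num [Fintype.sum_prod_type, vC, vD, zyWitness]
  ring_nf

lemma mi_vA_vB_zyWitness (ε : ℝ) : mi (zyWitness ε) vA vB =
    (2 * negMulLog (1 / 2 + -1 / 2 * ε) + 2 * negMulLog (1 / 2 + 1 / 2 * ε)
      - 3 * negMulLog (1 / 4 + -1 / 4 * ε) - negMulLog (1 / 4 + 3 / 4 * ε)) / log 2 := by
  simp only [mi, ent_eq_sum_negMulLog, prOf, Finset.sum_filter]
  norm_num [Fintype.sum_prod_type, vA, vB, zyWitness]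
  ring_nf

lemma mi_vC_vD_zyWitness_zero : mi (zyWitness 0) vC vD = 0 := by
  simp [mi_vC_vD_zyWitness]

lemma mi_vA_vB_zyWitness_zero : mi (zyWitness 0) vA vB = 0 := by
  simp only [mi_vA_vB_zyWitness, mul_zero, add_zero]
  rw [negMulLog_div, negMulLog_div, negMulLog_one, show (4 : ℝ) = 2 ^ 2 by norm_num, log_pow]
  ring

lemma hasDerivAt_mi_vC_vD_zyWitness :
    HasDerivAt (fun ε => mi (zyWitness ε) vC vD) (log (4 / 3) / log 2) 0 := by
  simp only [mi_vC_vD_zyWitness]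
  have h₁ := hasDerivAt_negMulLog_affine (-1) one_ne_zero
  have h₂ := hasDerivAt_negMulLog_affine (1 / 4) (by norm_num : (3 / 4 : ℝ) ≠ 0)
  have h₃ := hasDerivAt_negMulLog_affine (-3 / 4) (by norm_num : (3 / 4 : ℝ) ≠ 0)
  refine ((h₁.fun_add h₂).fun_sub h₃ |>.div_const (log 2)).congr_deriv ?_
  rw [show (4 / 3 : ℝ) = (3 / 4)⁻¹ by norm_num, log_inv, log_one]
  ring

lemma hasDerivAt_mi_vA_vB_zyWitness :
    HasDerivAt (fun ε => mi (zyWitness ε) vA vB) 0 0 := by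
  simp only [mi_vA_vB_zyWitness]
  have h₁ := hasDerivAt_negMulLog_affine (-1 / 2) (by norm_num : (1 / 2 : ℝ) ≠ 0)
  have h₂ := hasDerivAt_negMulLog_affine (1 / 2) (by norm_num : (1 / 2 : ℝ) ≠ 0)
  have h₃ := hasDerivAt_negMulLog_affine (-1 / 4) (by norm_num : (1 / 4 : ℝ) ≠ 0)
  have h₄ := hasDerivAt_negMulLog_affine (3 / 4) (by norm_num : (1 / 4 : ℝ) ≠ 0)
  refine (((h₁.const_mul 2).fun_add (h₂.const_mul 2)).fun_sub (h₃.const_mul 3) |>.fun_sub h₄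
    |>.div_const (log 2)).congr_deriv ?_
  ring

theorem zy_essentially_conditional (κ : ℝ) :
    ∃ p : Bool × Bool × Bool × Bool → ℝ, IsPMF p ∧
      cmi p vC vD vA + cmi p vC vD vB + κ * (mi p vA vB + cmi p vA vB vC)
        < mi p vC vD := by
  have hderiv : HasDerivAt (fun ε => mi (zyWitness ε) vC vD - κ * mi (zyWitness ε) vA vB)
      (log (4 / 3) / log 2) 0 := by
    simpa using hasDerivAt_mi_vC_vD_zyWitness.fun_sub (hasDerivAt_mi_vA_vB_zyWitness.const_mul κ)
  have hslope : 0 < log (4 / 3) / log 2 := div_pos (log_pos (by norm_num)) (log_pos (by norm_num))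
  obtain ⟨ε, hgap, hε⟩ := ((hderiv.eventually_lt_right hslope).and (Ioo_mem_nhdsGT one_pos)).exists
  refine ⟨zyWitness ε, isPMF_zyWitness hε.1.le hε.2.le, ?_⟩
  rw [mi_vC_vD_zyWitness_zero, mi_vA_vB_zyWitness_zero] at hgap
  rw [cmi_vC_vD_vA_zyWitness, cmi_vC_vD_vB_zyWitness, cmi_vA_vB_vC_zyWitness]
  linarith

end
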